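/- arXiv:1609.07654 — 5 statements merged into one kernel-verified Lean document; each statement's English description precedes it below -/
import Mathlib

section
/- If λc - βh > 0 and β(λc - βh) - acd > 0, then the point E2 = ((λc - βh)/(cd), dh/(λc - βh), β(λc - βh)/(cdp) - a/p) satisfies the equilibrium equations λ - d x̄ - β x̄ ȳ = 0, β x̄ ȳ - a ȳ - p ȳ z̄ = 0, and c x̄ ȳ z̄ - h z̄ = 0, and moreover all three coordinates of E2 are positive. -/
/-! Writing `s = λc - βh`, the coordinates satisfy `c x̄ȳ = h`, `c d x̄ = s` and
`p z̄ = β x̄ - a`. Each equilibrium equation is a combination of these three identities, and the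
second hypothesis says exactly that `β x̄ > a`, i.e. `z̄ > 0`. -/

theorem E2_is_equilibrium_general (lam d β a p c h : ℝ)
    (hd : 0 < d) (hp : 0 < p) (hc : 0 < c) (hh : 0 < h)
    (h1 : lam * c - β * h > 0) (h2 : β * (lam * c - β * h) - a * c * d > 0) :
    let x : ℝ := (lam * c - β * h) / (c * d)
    let y : ℝ := d * h / (lam * c - β * h)
    let z : ℝ := β * (lam * c - β * h) / (c * d * p) - a / p
    (lam - d * x - β * x * y = 0 ∧
     β * x * y - a * y - p * y * z = 0 ∧
     c * x * y * z - h * z = 0) ∧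
    (0 < x ∧ 0 < y ∧ 0 < z) := by
  set s := lam * c - β * h with hs_def
  intro x y z
  have hs : s ≠ 0 := h1.ne'
  have hxy : c * x * y = h := by simp only [x, y]; field_simp
  have hdx : c * (d * x) = s := by simp only [x]; field_simp
  have hpz : p * z = β * x - a := by simp only [x, z]; field_simp
  have hβx : a < β * x := by
    simp only [x]; rw [mul_div_assoc', lt_div_iff₀ (by positivity)]; linarith
  refine ⟨⟨?_, ?_, ?_⟩, div_pos h1 (by positivity), div_pos (by positivity) h1, ?_⟩
  · apply mul_left_cancel₀ hc.ne'
    linear_combination -hdx - β * hxy + hs_def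
  · linear_combination -y * hpz
  · linear_combination z * hxy
  · exact pos_of_mul_pos_right (hpz ▸ sub_pos.mpr hβx) hp.le

/-- If λc - βh > 0 and β(λc - βh) - acd > 0, then E2 satisfies the
equilibrium equations and all its coordinates are positive. -/
theorem E2_is_equilibrium (lam d β a p c h : ℝ)
    (hlam : 0 < lam) (hd : 0 < d) (hβ : 0 < β) (ha : 0 < a)
    (hp : 0 < p) (hc : 0 < c) (hh : 0 < h)
    (h1 : lam * c - β * h > 0) (h2 : β * (lam * c - β * h) - a * c * d > 0) :
    let x : ℝ := (lam * c - β * h) / (c * d)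
    let y : ℝ := d * h / (lam * c - β * h)
    let z : ℝ := β * (lam * c - β * h) / (c * d * p) - a / p
    (lam - d * x - β * x * y = 0 ∧
     β * x * y - a * y - p * y * z = 0 ∧
     c * x * y * z - h * z = 0) ∧
    (0 < x ∧ 0 < y ∧ 0 < z) :=
  E2_is_equilibrium_general lam d β a p c h hd hp hc hh h1 h2
end

section
/- Suppose βλ - da < 0 and τ ≥ 0. Then there is no real w ≠ 0 such that the purely imaginary number iw is a root of the equation ad + d s - βλ e^{-sτ} = 0 (as an equation in the complex variable s). -/
open Complex

/-! On the imaginary axis `|e^{-sτ}| = 1`, so the real part of `p + d s - b e^{-sτ}` is at least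
`p - |b|`, which is positive when `|b| < p`; here `p = ad` and `b = βλ`. -/

theorem Complex.re_ofReal_mul_exp_le_abs (b : ℝ) {z : ℂ} (hz : z.re = 0) :
    ((b : ℂ) * exp z).re ≤ |b| :=
  calc ((b : ℂ) * exp z).re ≤ ‖(b : ℂ) * exp z‖ := re_le_norm _
    _ = |b| := by rw [norm_mul, norm_exp, hz, Real.exp_zero, mul_one, norm_real, Real.norm_eq_abs]

theorem Complex.ofReal_add_mul_sub_mul_exp_ne_zero {p b : ℝ} (hbp : |b| < p) (d τ : ℝ) {s : ℂ}
    (hs : s.re = 0) : (p : ℂ) + d * s - b * exp (-s * τ) ≠ 0 := by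
  have hexp : (-s * τ).re = 0 := by simp [hs]
  have hre : ((p : ℂ) + d * s - b * exp (-s * τ)).re = p - ((b : ℂ) * exp (-s * τ)).re := by
    simp [hs]
  intro h
  have := re_ofReal_mul_exp_le_abs b hexp
  rw [h, zero_re] at hre
  linarith

theorem no_pure_imaginary_root_E0_general (lam d β a τ : ℝ)
    (hlam : 0 < lam) (hβ : 0 < β) (h1 : β * lam - d * a < 0) :
    ¬ ∃ w : ℝ, w ≠ 0 ∧
      (a : ℂ) * d + d * (Complex.I * w) -
        (β : ℂ) * lam * Complex.exp (-(Complex.I * w) * τ) = 0 := by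
  rintro ⟨w, -, hroot⟩
  have hbp : |β * lam| < a * d := by
    rw [abs_of_pos (mul_pos hβ hlam)]
    linarith
  refine ofReal_add_mul_sub_mul_exp_ne_zero hbp d τ (s := I * w) (by simp) ?_
  push_cast
  exact hroot

/-- If βλ - da < 0 and τ ≥ 0, the characteristic factor
ad + ds - βλ e^{-sτ} has no nonzero pure imaginary root s = iw. -/
theorem no_pure_imaginary_root_E0 (lam d β a τ : ℝ)
    (hlam : 0 < lam) (hd : 0 < d) (hβ : 0 < β) (ha : 0 < a)
    (hτ : 0 ≤ τ) (h1 : β * lam - d * a < 0) :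
    ¬ ∃ w : ℝ, w ≠ 0 ∧
      (a : ℂ) * d + d * (Complex.I * w) -
        (β : ℂ) * lam * Complex.exp (-(Complex.I * w) * τ) = 0 :=
  no_pure_imaginary_root_E0_general lam d β a τ hlam hβ h1
end

section
/- Let a > 0, τ ≥ 0, and suppose u ≥ 0 and w are real numbers satisfying u + a = e^{-uτ} a cos(wτ) and w = -e^{-uτ} a sin(wτ). Then u = 0 and w = 0. In other words, the equation s + a - a e^{-sτ} = 0 has no complex root s = u + iw with u ≥ 0 other than s = 0. -/
/-!
Squaring and adding the real and imaginary parts gives `|s + a| = a e^{-uτ} ≤ a` for `s = u + iw`,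
so `s` lies in the closed disc of radius `a` about `-a`, which meets the half-plane `u ≥ 0` only at `0`.
-/

open Real

lemma sq_add_sq_eq_sq_of_eq_mul_cos_of_eq_neg_mul_sin {x y r θ : ℝ}
    (hx : x = r * cos θ) (hy : y = -r * sin θ) : x ^ 2 + y ^ 2 = r ^ 2 := by
  rw [hx, hy]
  linear_combination r ^ 2 * sin_sq_add_cos_sq θ

lemma exp_neg_mul_le_one {u τ : ℝ} (hu : 0 ≤ u) (hτ : 0 ≤ τ) : exp (-u * τ) ≤ 1 := by
  rw [exp_le_one_iff, neg_mul]
  exact neg_nonpos.mpr (mul_nonneg hu hτ)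

lemma eq_zero_of_sq_add_sq_le_sq {a u w : ℝ} (ha : 0 < a) (hu : 0 ≤ u)
    (h : (u + a) ^ 2 + w ^ 2 ≤ a ^ 2) : u = 0 ∧ w = 0 := by
  have hprod : 0 ≤ u * (u + 2 * a) := mul_nonneg hu (by linarith)
  have hsum : w ^ 2 + u * (u + 2 * a) ≤ 0 := by linarith
  have hw : w ^ 2 = 0 := by linarith [sq_nonneg w]
  have hu' : u * (u + 2 * a) = 0 := by linarith [sq_nonneg w]
  refine ⟨?_, pow_eq_zero_iff two_ne_zero |>.mp hw⟩
  rcases mul_eq_zero.mp hu' with h0 | h0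
  · exact h0
  · linarith

/-- Critical case: if u ≥ 0, u + a = e^{-uτ} a cos(wτ) and
w = -e^{-uτ} a sin(wτ), then u = 0 and w = 0. -/
theorem critical_case_roots (a τ u w : ℝ)
    (ha : 0 < a) (hτ : 0 ≤ τ) (hu : 0 ≤ u)
    (h1 : u + a = Real.exp (-u * τ) * a * Real.cos (w * τ))
    (h2 : w = -(Real.exp (-u * τ) * a) * Real.sin (w * τ)) :
    u = 0 ∧ w = 0 := by
  have hmod : (u + a) ^ 2 + w ^ 2 = (exp (-u * τ) * a) ^ 2 :=
    sq_add_sq_eq_sq_of_eq_mul_cos_of_eq_neg_mul_sin h1 h2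
  have hshrink : exp (-u * τ) * a ≤ a :=
    mul_le_of_le_one_left ha.le (exp_neg_mul_le_one hu hτ)
  refine eq_zero_of_sq_add_sq_le_sq ha hu (hmod ▸ ?_)
  exact pow_le_pow_left₀ (by positivity) hshrink 2
end

section
/- Let λ, d, β, a > 0 with βλ - da > 0, and let τ > 0, w real. If -w²a + λβa = a²d cos(wτ) + wa² sin(wτ) and wa² + λβw = wa² cos(wτ) - a²d sin(wτ), then a²w⁴ + w²λ²β² = a²(a²d² - λ²β²). Since the right-hand side is negative while the left-hand side is nonnegative, no such real w exists. -/
/-! The two equations say that the vector `(a(λβ - w²), w(a² + λβ))` is the rotation by the angle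
`wτ` of `(a²d, wa²)`, so both have the same length; expanding that equality of squared lengths
gives the identity. As `βλ > da > 0`, its right-hand side is negative, its left-hand side is not. -/

open Real

theorem sq_add_sq_eq_of_eq_rotation {x y p q θ : ℝ}
    (hx : x = p * cos θ + q * sin θ) (hy : y = q * cos θ - p * sin θ) :
    x ^ 2 + y ^ 2 = p ^ 2 + q ^ 2 := by
  rw [hx, hy]
  linear_combination (p ^ 2 + q ^ 2) * sin_sq_add_cos_sq θ

theorem no_pure_imaginary_root_E1_general (lam d β a τ w : ℝ)
    (hd : 0 < d) (ha : 0 < a)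
    (h1 : β * lam - d * a > 0)
    (e1 : -(w ^ 2) * a + lam * β * a =
      a ^ 2 * d * Real.cos (w * τ) + w * a ^ 2 * Real.sin (w * τ))
    (e2 : w * a ^ 2 + lam * β * w =
      w * a ^ 2 * Real.cos (w * τ) - a ^ 2 * d * Real.sin (w * τ)) :
    (a ^ 2 * w ^ 4 + w ^ 2 * lam ^ 2 * β ^ 2 =
      a ^ 2 * (a ^ 2 * d ^ 2 - lam ^ 2 * β ^ 2)) ∧ False := by
  have hidentity : a ^ 2 * w ^ 4 + w ^ 2 * lam ^ 2 * β ^ 2 =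
      a ^ 2 * (a ^ 2 * d ^ 2 - lam ^ 2 * β ^ 2) := by
    linear_combination sq_add_sq_eq_of_eq_rotation e1 e2
  refine ⟨hidentity, ?_⟩
  have hda : 0 < d * a := mul_pos hd ha
  have hsq : (d * a) ^ 2 < (β * lam) ^ 2 := pow_lt_pow_left₀ (by linarith) hda.le two_ne_zero
  have hrhs : a ^ 2 * (a ^ 2 * d ^ 2 - lam ^ 2 * β ^ 2) < 0 :=
    mul_neg_of_pos_of_neg (by positivity) (by linear_combination hsq)
  have hlhs : 0 ≤ a ^ 2 * w ^ 4 + w ^ 2 * lam ^ 2 * β ^ 2 := by positivity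
  linarith

/-- No pure imaginary roots at E1: the trig equations imply the identity
a²w⁴ + w²λ²β² = a²(a²d² - λ²β²) whose right-hand side is negative,
a contradiction. -/
theorem no_pure_imaginary_root_E1 (lam d β a τ w : ℝ)
    (hlam : 0 < lam) (hd : 0 < d) (hβ : 0 < β) (ha : 0 < a)
    (h1 : β * lam - d * a > 0) (hτ : 0 < τ)
    (e1 : -(w ^ 2) * a + lam * β * a =
      a ^ 2 * d * Real.cos (w * τ) + w * a ^ 2 * Real.sin (w * τ))
    (e2 : w * a ^ 2 + lam * β * w =
      w * a ^ 2 * Real.cos (w * τ) - a ^ 2 * d * Real.sin (w * τ)) :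
    (a ^ 2 * w ^ 4 + w ^ 2 * lam ^ 2 * β ^ 2 =
      a ^ 2 * (a ^ 2 * d ^ 2 - lam ^ 2 * β ^ 2)) ∧ False :=
  no_pure_imaginary_root_E1_general lam d β a τ w hd ha h1 e1 e2
end

section
/- Assume λc - βh > 0 and β(λc - βh) - acd > 0 where all parameters λ, d, β, a, c, h are positive. Define D = dλc/(λc - βh), E = (βλc - acd + dβ² - β²h)h/(cd), F = (βλc - β²h - acd)h/c. Then D > 0, E > 0, F > 0 and DE - F = hβ(cλdβ + h(cλβ - cad - β²h))/((λc - βh)c) > 0; hence by the Routh–Hurwitz criterion all roots of s³ + D s² + E s + F have strictly negative real part. -/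
theorem Complex.re_neg_of_cubic_eq_zero {D E F : ℝ} (hD : 0 ≤ D) (hE : 0 ≤ E) (hF : 0 < F)
    (hDEF : F < D * E) {s : ℂ} (hs : s ^ 3 + (D : ℂ) * s ^ 2 + (E : ℂ) * s + (F : ℂ) = 0) :
    s.re < 0 := by
  obtain ⟨x, y⟩ := s
  have hre := congrArg Complex.re hs
  have him := congrArg Complex.im hs
  simp only [pow_succ, pow_zero, one_mul, Complex.mul_re, Complex.mul_im, Complex.add_re,
    Complex.add_im, Complex.ofReal_re, Complex.ofReal_im, Complex.zero_re, Complex.zero_im]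
    at hre him
  by_contra! hx
  have him' : y * (3 * x ^ 2 - y ^ 2 + 2 * D * x + E) = 0 := by linear_combination him
  rcases mul_eq_zero.mp him' with hy | hy
  · subst hy
    nlinarith [mul_nonneg hD (mul_nonneg hx hx), mul_nonneg hE hx, pow_nonneg hx 3]
  · -- eliminating `y ^ 2` from the real part leaves a sum of nonpositive terms minus `D * E - F`
    have hreal : 8 * x ^ 3 + 8 * D * x ^ 2 + 2 * E * x + 2 * D ^ 2 * x + (D * E - F) = 0 := by
      linear_combination -hre + (3 * x + D) * hy
    nlinarith [mul_nonneg hD (mul_nonneg hx hx), mul_nonneg hE hx, pow_nonneg hx 3,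
      mul_nonneg (sq_nonneg D) hx]

theorem stability_E2_tau0_general (lam d β a c h : ℝ)
    (hlam : 0 < lam) (hd : 0 < d) (hβ : 0 < β)
    (hc : 0 < c) (hh : 0 < h)
    (h2 : lam * c - β * h > 0) (h3 : β * (lam * c - β * h) - a * c * d > 0) :
    let D : ℝ := d * lam * c / (lam * c - β * h)
    let E : ℝ := (β * lam * c - a * c * d + d * β ^ 2 - β ^ 2 * h) * h / (c * d)
    let F : ℝ := (β * lam * c - β ^ 2 * h - a * c * d) * h / c
    (0 < D ∧ 0 < E ∧ 0 < F) ∧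
    D * E - F = h * β * (c * lam * d * β + h * (c * lam * β - c * a * d - β ^ 2 * h))
        / ((lam * c - β * h) * c) ∧
    0 < D * E - F ∧
    ∀ s : ℂ, s ^ 3 + (D : ℂ) * s ^ 2 + (E : ℂ) * s + (F : ℂ) = 0 → s.re < 0 := by
  intro D E F
  have hD : 0 < D := by positivity
  have hE : 0 < E := div_pos (mul_pos (by nlinarith [sq_nonneg β]) hh) (by positivity)
  have hF : 0 < F := div_pos (mul_pos (by linarith) hh) hc
  have hDEF_eq : D * E - F = h * β * (c * lam * d * β + h * (c * lam * β - c * a * d - β ^ 2 * h))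
      / ((lam * c - β * h) * c) := by
    simp only [D, E, F]
    field_simp
    ring
  have hDEF : 0 < D * E - F := by
    have : 0 < c * lam * β - c * a * d - β ^ 2 * h := by linarith
    rw [hDEF_eq]
    positivity
  exact ⟨⟨hD, hE, hF⟩, hDEF_eq, hDEF, fun s hs =>
    Complex.re_neg_of_cubic_eq_zero hD.le hE.le hF (sub_pos.mp hDEF) hs⟩

/-- Routh–Hurwitz conditions at the CTL equilibrium E2 for τ = 0. -/
theorem stability_E2_tau0 (lam d β a c h : ℝ)
    (hlam : 0 < lam) (hd : 0 < d) (hβ : 0 < β) (ha : 0 < a)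
    (hc : 0 < c) (hh : 0 < h)
    (h2 : lam * c - β * h > 0) (h3 : β * (lam * c - β * h) - a * c * d > 0) :
    let D : ℝ := d * lam * c / (lam * c - β * h)
    let E : ℝ := (β * lam * c - a * c * d + d * β ^ 2 - β ^ 2 * h) * h / (c * d)
    let F : ℝ := (β * lam * c - β ^ 2 * h - a * c * d) * h / c
    (0 < D ∧ 0 < E ∧ 0 < F) ∧
    D * E - F = h * β * (c * lam * d * β + h * (c * lam * β - c * a * d - β ^ 2 * h))
        / ((lam * c - β * h) * c) ∧
    0 < D * E - F ∧
    ∀ s : ℂ, s ^ 3 + (D : ℂ) * s ^ 2 + (E : ℂ) * s + (F : ℂ) = 0 → s.re < 0 :=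
  stability_E2_tau0_general lam d β a c h hlam hd hβ hc hh h2 h3
end
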